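/- For every b > 0 there exists β₀ > 0 such that for all β with 0 < β ≤ β₀ and all integers i₀' > i₀ ≥ 1, there exist β' > 0 and n₀ such that the following holds for all n ≥ n₀. Given an n-vertex 3-graph H with δ₂(H) ≥ bn, if x, y ∈ V(H) are (β, i₀)-reachable in H, then x, y are (β', i₀')-reachable in H. -/

import Mathlib

/-- The degree of a vertex set `S` in the hypergraph with edge set `E`:
the number of edges containing `S`. -/
def degS {n : ℕ} (E : Finset (Finset (Fin n))) (S : Finset (Fin n)) : ℕ :=
  (E.filter (fun e => S ⊆ e)).card

/-- `s` spans a copy of `C₆³` (edges 123, 345, 561) in the 3-graph with edge set `E`. -/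
def IsC6Copy {n : ℕ} (E : Finset (Finset (Fin n))) (s : Finset (Fin n)) : Prop :=
  ∃ v : Fin 6 → Fin n, Function.Injective v ∧
    s = {v 0, v 1, v 2, v 3, v 4, v 5} ∧
    {v 0, v 1, v 2} ∈ E ∧ {v 2, v 3, v 4} ∈ E ∧ {v 4, v 5, v 0} ∈ E

/-- The set `W` can be perfectly tiled by vertex-disjoint copies of `C₆³`
(seen as a `C₆³`-factor of the subhypergraph induced on `W`). -/
def HasC6Factor {n : ℕ} (E : Finset (Finset (Fin n))) (W : Finset (Fin n)) : Prop :=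
  ∃ P : Finset (Finset (Fin n)), (∀ s ∈ P, IsC6Copy E s) ∧
    (∀ s ∈ P, ∀ t ∈ P, s ≠ t → Disjoint s t) ∧ P.biUnion id = W

/-- The number of reachable `m`-sets for `x` and `y`: sets `S ⊆ V ∖ {x,y}` of size `m`
such that both `H[{x} ∪ S]` and `H[{y} ∪ S]` contain `C₆³`-factors. -/
noncomputable def numReachSets {n : ℕ} (E : Finset (Finset (Fin n))) (x y : Fin n) (m : ℕ) : ℕ :=
  {S : Finset (Fin n) | S.card = m ∧ x ∉ S ∧ y ∉ S ∧
    HasC6Factor E (insert x S) ∧ HasC6Factor E (insert y S)}.ncard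

/-- `x` and `y` are `(β, i)`-reachable: there are at least `β·n^(6i-1)` reachable
`(6i-1)`-sets for `x` and `y`. -/
def IsReachable {n : ℕ} (β : ℝ) (i : ℕ) (E : Finset (Finset (Fin n))) (x y : Fin n) : Prop :=
  β * (n : ℝ) ^ (6 * i - 1) ≤ (numReachSets E x y (6 * i - 1) : ℝ)

/-- `Ñ_{β,i}(x)`: the set of vertices `(β, i)`-reachable to `x`. -/
def tildeN {n : ℕ} (β : ℝ) (i : ℕ) (E : Finset (Finset (Fin n))) (x : Fin n) : Set (Fin n) :=
  {y | y ≠ x ∧ IsReachable β i E x y}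

/-!
Adding to a reachable `m`-set `S` for `x, y` any copy of `C₆³` disjoint from `{x, y} ∪ S`
gives a reachable `(m + 6)`-set. With codegrees at least `b n`, a labelled copy can be chosen
vertex by vertex with `Ω(n)` options at each of the six steps, while a given `(m + 6)`-set arises
from at most `(m + 6)⁶` pairs `(S, labelled copy)`. So the number of reachable `(6i - 1)`-sets
grows by a factor `Ω(n⁶)` from `i` to `i + 1`, and induction on `i₀' - i₀` finishes the proof.
-/

open Finset Function

section SnocFresh

variable {α : Type*} [DecidableEq α] {k : ℕ}

def snocFresh (F : Finset α) (B : (Fin k → α) → Finset α) (T : Finset (Fin k → α)) :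
    Finset (Fin (k + 1) → α) :=
  (T.sigma fun v => B v \ (F ∪ univ.image v)).image fun p => Fin.snoc p.1 p.2

variable {F : Finset α} {B : (Fin k → α) → Finset α} {T : Finset (Fin k → α)}

theorem mem_snocFresh {w : Fin (k + 1) → α} :
    w ∈ snocFresh F B T ↔
      Fin.init w ∈ T ∧ w (Fin.last k) ∈ B (Fin.init w) \ (F ∪ univ.image (Fin.init w)) := by
  constructor
  · intro hw
    obtain ⟨⟨v, a⟩, hva, rfl⟩ := mem_image.mp hw
    simpa [Fin.init_snoc, Fin.snoc_last] using mem_sigma.mp hva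
  · rintro ⟨hT, hlast⟩
    exact mem_image.mpr ⟨⟨Fin.init w, w (Fin.last k)⟩, mem_sigma.mpr ⟨hT, hlast⟩,
      Fin.snoc_init_self w⟩

theorem card_mul_le_card_snocFresh {M : ℕ} (hB : ∀ v ∈ T, M + #F + k ≤ #(B v)) :
    #T * M ≤ #(snocFresh F B T) := by
  have hinj :
      Injective fun p : (_ : Fin k → α) × α => (Fin.snoc p.1 p.2 : Fin (k + 1) → α) :=
    fun p q h => by
      obtain ⟨h1, h2⟩ := Fin.snoc_injective2 h
      exact Sigma.ext h1 (heq_of_eq h2)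
  rw [snocFresh, card_image_of_injective _ hinj, card_sigma, ← smul_eq_mul]
  refine card_nsmul_le_sum _ _ _ fun v hv => ?_
  have hfresh : #(F ∪ univ.image v) ≤ #F + k :=
    (card_union_le _ _).trans (Nat.add_le_add_left (card_image_le.trans_eq (card_fin k)) _)
  have := le_card_sdiff (F ∪ univ.image v) (B v)
  have := hB v hv
  omega

theorem snocFresh_injective_notMem (hT : ∀ v ∈ T, Injective v ∧ ∀ i, v i ∉ F) :
    ∀ w ∈ snocFresh F B T, Injective w ∧ ∀ i, w i ∉ F := by
  intro w hw
  obtain ⟨hinit, hlast⟩ := mem_snocFresh.mp hw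
  simp only [mem_sdiff, mem_union, mem_image, mem_univ, true_and, not_or] at hlast
  obtain ⟨hinj, hF⟩ := hT _ hinit
  rw [← Fin.snoc_init_self w]
  refine ⟨Fin.snoc_injective_of_injective hinj hlast.2.2, fun i => ?_⟩
  induction i using Fin.lastCases with
  | last => simpa using hlast.2.1
  | cast i => simpa using hF i

end SnocFresh

section C6Embeddings

variable {n : ℕ} {E : Finset (Finset (Fin n))} {F : Finset (Fin n)} {v : Fin 6 → Fin n}

def link (E : Finset (Finset (Fin n))) (a c : Fin n) : Finset (Fin n) :=
  univ.filter fun w => {a, c, w} ∈ E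

theorem degS_pair_le_card_link (hE : ∀ e ∈ E, e.card = 3) {a c : Fin n} (hac : a ≠ c) :
    degS E {a, c} ≤ #(link E a c) := by
  refine card_le_card_of_surjOn (fun w => {a, c, w}) fun e he => ?_
  obtain ⟨heE, hace⟩ := mem_filter.mp he
  have hpair : #({a, c} : Finset (Fin n)) = 2 := card_pair hac
  obtain ⟨w, hw⟩ : ∃ w, e \ {a, c} = {w} := by
    rw [← card_eq_one, card_sdiff_of_subset hace, hE e heE, hpair]
  have he_eq : ({a, c, w} : Finset (Fin n)) = e := by
    rw [← sdiff_union_of_subset hace, hw]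
    ext; simp only [mem_insert, mem_singleton, mem_union]; tauto
  exact ⟨w, by simpa [link, he_eq] using heE, he_eq⟩

/-- Labelled copies `v` of `C₆³` avoiding `F`, built vertex by vertex: each edge is imposed
when its last vertex is chosen, so every choice has at least `δ₂ - |F| - 5` options. -/
def c6Embeddings (E : Finset (Finset (Fin n))) (F : Finset (Fin n)) : Finset (Fin 6 → Fin n) :=
  ({![]} : Finset (Fin 0 → Fin n))
    |> snocFresh F (fun _ => univ)
    |> snocFresh F (fun _ => univ)
    |> snocFresh F (fun v => link E (v 0) (v 1))
    |> snocFresh F (fun _ => univ)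
    |> snocFresh F (fun v => link E (v 2) (v 3))
    |> snocFresh F (fun v => link E (v 4) (v 0))

theorem injective_notMem_of_mem_c6Embeddings (hv : v ∈ c6Embeddings E F) :
    Injective v ∧ ∀ i, v i ∉ F := by
  refine snocFresh_injective_notMem (snocFresh_injective_notMem (snocFresh_injective_notMem
    (snocFresh_injective_notMem (snocFresh_injective_notMem (snocFresh_injective_notMem
    fun _ _ => ⟨injective_of_subsingleton _, fun i => i.elim0⟩))))) v hv

theorem disjoint_image_of_mem_c6Embeddings (hv : v ∈ c6Embeddings E F) :
    Disjoint F (univ.image v) := by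
  simpa [disjoint_right] using (injective_notMem_of_mem_c6Embeddings hv).2

theorem isC6Copy_of_mem_c6Embeddings (hv : v ∈ c6Embeddings E F) :
    IsC6Copy E (univ.image v) := by
  have hinj := (injective_notMem_of_mem_c6Embeddings hv).1
  simp only [c6Embeddings, mem_snocFresh, mem_sdiff, link, mem_filter, mem_univ, true_and] at hv
  obtain ⟨⟨⟨⟨⟨⟨-, -⟩, -⟩, e₀, -⟩, -⟩, e₂, -⟩, e₄, -⟩ := hv
  refine ⟨v, hinj, ?_, e₀, e₂, ?_⟩
  · ext; simp [Fin.exists_fin_succ, eq_comm]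
  · rw [pair_comm]
    exact e₄

theorem pow_le_card_c6Embeddings {M : ℕ} (hE : ∀ e ∈ E, e.card = 3)
    (hn : M + #F + 5 ≤ n) (hdeg : ∀ a c : Fin n, a ≠ c → M + #F + 5 ≤ degS E {a, c}) :
    M ^ 6 ≤ #(c6Embeddings E F) := by
  have univ_step {k : ℕ} (T : Finset (Fin k → Fin n)) (hk : k ≤ 5) :
      #T * M ≤ #(snocFresh F (fun _ => univ) T) :=
    card_mul_le_card_snocFresh fun _ _ => by rw [card_univ, Fintype.card_fin]; omega
  have link_step {k : ℕ} (T : Finset (Fin k → Fin n)) (i j : Fin k) (hk : k ≤ 5)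
      (hij : i ≠ j) (hT : ∀ v ∈ T, Injective v ∧ ∀ i, v i ∉ F) :
      #T * M ≤ #(snocFresh F (fun v => link E (v i) (v j)) T) :=
    card_mul_le_card_snocFresh fun v hv => by
      have hvij := (hT v hv).1.ne hij
      have := degS_pair_le_card_link hE hvij
      have := hdeg _ _ hvij
      omega
  set T₀ : Finset (Fin 0 → Fin n) := {![]}
  set T₁ := snocFresh F (fun _ => univ) T₀
  set T₂ := snocFresh F (fun _ => univ) T₁
  set T₃ := snocFresh F (fun v => link E (v 0) (v 1)) T₂
  set T₄ := snocFresh F (fun _ => univ) T₃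
  set T₅ := snocFresh F (fun v => link E (v 2) (v 3)) T₄
  have h₀ : ∀ v ∈ T₀, Injective v ∧ ∀ i, v i ∉ F :=
    fun _ _ => ⟨injective_of_subsingleton _, fun i => i.elim0⟩
  have h₂ : ∀ v ∈ T₂, Injective v ∧ ∀ i, v i ∉ F :=
    snocFresh_injective_notMem (snocFresh_injective_notMem h₀)
  have h₄ : ∀ v ∈ T₄, Injective v ∧ ∀ i, v i ∉ F :=
    snocFresh_injective_notMem (snocFresh_injective_notMem h₂)
  have h₅ : ∀ v ∈ T₅, Injective v ∧ ∀ i, v i ∉ F := snocFresh_injective_notMem h₄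
  have s₁ := univ_step T₀ (by norm_num)
  have s₂ := univ_step T₁ (by norm_num)
  have s₃ := link_step T₂ 0 1 (by norm_num) (by decide) h₂
  have s₄ := univ_step T₃ (by norm_num)
  have s₅ := link_step T₄ 2 3 (by norm_num) (by decide) h₄
  have s₆ := link_step T₅ 4 0 (by norm_num) (by decide) h₅
  calc M ^ 6 = #T₀ * M * M * M * M * M * M := by rw [card_singleton]; ring
    _ ≤ #T₁ * M * M * M * M * M := by gcongr
    _ ≤ #T₂ * M * M * M * M := by gcongr
    _ ≤ #T₃ * M * M * M := by gcongr
    _ ≤ #T₄ * M * M := by gcongr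
    _ ≤ #T₅ * M := by gcongr
    _ ≤ #(c6Embeddings E F) := s₆

end C6Embeddings

section ReachableSets

variable {n : ℕ} {E : Finset (Finset (Fin n))}

theorem HasC6Factor.union {W T : Finset (Fin n)} (hW : HasC6Factor E W) (hT : IsC6Copy E T)
    (hWT : Disjoint W T) : HasC6Factor E (W ∪ T) := by
  obtain ⟨P, hcopy, hdisj, rfl⟩ := hW
  have hsub : ∀ s ∈ P, s ⊆ P.biUnion id := fun s hs => subset_biUnion_of_mem id hs
  refine ⟨insert T P, ?_, ?_, by rw [biUnion_insert, union_comm]; rfl⟩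
  · simpa [forall_mem_insert] using ⟨hT, hcopy⟩
  · simp only [mem_insert]
    rintro s (rfl | hs) t (rfl | ht) hst
    · exact absurd rfl hst
    · exact (hWT.mono_left (hsub t ht)).symm
    · exact hWT.mono_left (hsub s hs)
    · exact hdisj s hs t ht hst

open Classical in
noncomputable def reachSets (E : Finset (Finset (Fin n))) (x y : Fin n) (m : ℕ) :
    Finset (Finset (Fin n)) :=
  univ.filter fun S => S.card = m ∧ x ∉ S ∧ y ∉ S ∧
    HasC6Factor E (insert x S) ∧ HasC6Factor E (insert y S)

theorem mem_reachSets {x y : Fin n} {m : ℕ} {S : Finset (Fin n)} :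
    S ∈ reachSets E x y m ↔ S.card = m ∧ x ∉ S ∧ y ∉ S ∧
      HasC6Factor E (insert x S) ∧ HasC6Factor E (insert y S) := by
  simp [reachSets]

theorem numReachSets_eq_card_reachSets (x y : Fin n) (m : ℕ) :
    numReachSets E x y m = #(reachSets E x y m) := by
  rw [numReachSets, ← Set.ncard_coe_finset, reachSets, coe_filter]
  simp only [mem_univ, true_and]

theorem disjoint_image_of_mem_c6Embeddings_insert {x y : Fin n} {S : Finset (Fin n)}
    {v : Fin 6 → Fin n} (hv : v ∈ c6Embeddings E (insert x (insert y S))) :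
    Disjoint S (univ.image v) :=
  (disjoint_image_of_mem_c6Embeddings hv).mono_left
    ((subset_insert y S).trans (subset_insert x _))

theorem union_image_mem_reachSets {x y : Fin n} {m : ℕ} {S : Finset (Fin n)}
    {v : Fin 6 → Fin n} (hS : S ∈ reachSets E x y m)
    (hv : v ∈ c6Embeddings E (insert x (insert y S))) :
    S ∪ univ.image v ∈ reachSets E x y (m + 6) := by
  have hinj := (injective_notMem_of_mem_c6Embeddings hv).1
  have hxyS := disjoint_image_of_mem_c6Embeddings hv
  obtain ⟨hcard, hx, hy, hFx, hFy⟩ := mem_reachSets.mp hS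
  rw [mem_reachSets]
  have hvS := disjoint_image_of_mem_c6Embeddings_insert hv
  have hvx : x ∉ univ.image v := disjoint_left.mp hxyS (mem_insert_self x _)
  have hvy : y ∉ univ.image v :=
    disjoint_left.mp hxyS (mem_insert_of_mem (mem_insert_self y S))
  have hcopy := isC6Copy_of_mem_c6Embeddings hv
  refine ⟨?_, ?_, ?_, ?_, ?_⟩
  · rw [card_union_of_disjoint hvS, hcard, card_image_of_injective _ hinj, card_univ,
      Fintype.card_fin]
  · simp [hx, hvx]
  · simp [hy, hvy]
  · rw [← insert_union]
    exact hFx.union hcopy (disjoint_insert_left.mpr ⟨hvx, hvS⟩)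
  · rw [← insert_union]
    exact hFy.union hcopy (disjoint_insert_left.mpr ⟨hvy, hvS⟩)

theorem card_reachSets_mul_pow_le (hE : ∀ e ∈ E, e.card = 3) (x y : Fin n) {m M : ℕ}
    (hn : M + m + 7 ≤ n) (hdeg : ∀ a c : Fin n, a ≠ c → M + m + 7 ≤ degS E {a, c}) :
    #(reachSets E x y m) * M ^ 6 ≤ (m + 6) ^ 6 * #(reachSets E x y (m + 6)) := by
  set R := reachSets E x y m
  set R' := reachSets E x y (m + 6)
  have hfiber : ∀ S ∈ R, M ^ 6 ≤ #(c6Embeddings E (insert x (insert y S))) := by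
    intro S hS
    have hS : #S = m := (mem_reachSets.mp hS).1
    have hF : #(insert x (insert y S)) ≤ m + 2 :=
      (card_insert_le _ _).trans (Nat.succ_le_succ ((card_insert_le _ _).trans_eq (by rw [hS])))
    exact pow_le_card_c6Embeddings hE (by omega) fun a c hac => (by have := hdeg a c hac; omega)
  let extend (p : (_ : Finset (Fin n)) × (Fin 6 → Fin n)) :
      (_ : Finset (Fin n)) × (Fin 6 → Fin n) := ⟨p.1 ∪ univ.image p.2, p.2⟩
  have hmaps : Set.MapsTo extend (R.sigma fun S => c6Embeddings E (insert x (insert y S)))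
      (R'.sigma fun S' => Fintype.piFinset fun _ : Fin 6 => S') := by
    rintro ⟨S, v⟩ hp
    obtain ⟨hS, hv⟩ := mem_sigma.mp hp
    exact mem_sigma.mpr ⟨union_image_mem_reachSets hS hv, Fintype.mem_piFinset.mpr fun i =>
      mem_union_right _ (mem_image_of_mem v (mem_univ i))⟩
  have hinj : Set.InjOn extend (R.sigma fun S => c6Embeddings E (insert x (insert y S))) := by
    rintro ⟨S₁, v₁⟩ hp₁ ⟨S₂, v₂⟩ hp₂ h
    obtain ⟨hunion, hv⟩ := Sigma.mk.inj_iff.mp h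
    obtain rfl : v₁ = v₂ := eq_of_heq hv
    have h₁ := disjoint_image_of_mem_c6Embeddings_insert (mem_sigma.mp hp₁).2
    have h₂ := disjoint_image_of_mem_c6Embeddings_insert (mem_sigma.mp hp₂).2
    refine Sigma.ext ?_ HEq.rfl
    calc S₁ = (S₁ ∪ univ.image v₁) \ univ.image v₁ := (union_sdiff_cancel_right h₁).symm
      _ = (S₂ ∪ univ.image v₁) \ univ.image v₁ := by rw [hunion]
      _ = S₂ := union_sdiff_cancel_right h₂
  calc #R * M ^ 6 ≤ #(R.sigma fun S => c6Embeddings E (insert x (insert y S))) := by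
        rw [card_sigma, ← smul_eq_mul]
        exact card_nsmul_le_sum _ _ _ hfiber
    _ ≤ #(R'.sigma fun S' => Fintype.piFinset fun _ : Fin 6 => S') :=
        card_le_card_of_injOn _ hmaps hinj
    _ = (m + 6) ^ 6 * #R' := by
        rw [card_sigma, sum_congr rfl fun S' hS' => by
          rw [Fintype.card_piFinset_const, (mem_reachSets.mp hS').1], sum_const, smul_eq_mul,
          mul_comm]

end ReachableSets

section Reachability

variable {b : ℝ}

theorem exists_mul_pow_mul_numReachSets_le (hb : 0 < b) (m : ℕ) :
    ∃ γ : ℝ, 0 < γ ∧ ∃ n₀ : ℕ, ∀ n : ℕ, n₀ ≤ n →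
      ∀ E : Finset (Finset (Fin n)), (∀ e ∈ E, e.card = 3) →
      (∀ S : Finset (Fin n), S.card = 2 → b * n ≤ (degS E S : ℝ)) →
      ∀ x y : Fin n,
        γ * (n : ℝ) ^ 6 * numReachSets E x y m ≤ numReachSets E x y (m + 6) := by
  set c := min b 1 / 2 with hc
  have hc₀ : 0 < c := by positivity
  refine ⟨(c / 2) ^ 6 / (m + 6) ^ 6, by positivity, ⌈(m + 7) / c⌉₊,
    fun n hn E hE hdeg x y => ?_⟩
  have hcn : (m + 7 : ℝ) ≤ c * n := by
    rw [← div_le_iff₀' hc₀]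
    exact Nat.ceil_le.mp hn
  -- `M` bounds the number of choices for each vertex of a copy; `min b 1` also keeps it below `n`.
  set M := ⌊c * n⌋₊
  have hM_le : (M : ℝ) ≤ c * n := Nat.floor_le (by positivity)
  have hM_ge : c * n / 2 ≤ M := by linarith [Nat.lt_floor_add_one (c * n)]
  have hsize : (M + m + 7 : ℝ) ≤ min b 1 * n := by
    have : min b 1 * n = 2 * (c * n) := by rw [hc]; ring
    linarith
  have hn' : M + m + 7 ≤ n := by
    exact_mod_cast hsize.trans (mul_le_of_le_one_left (Nat.cast_nonneg n) (min_le_right b 1))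
  have hdeg' (a c : Fin n) (hac : a ≠ c) : M + m + 7 ≤ degS E {a, c} := by
    have hb' : min b 1 * n ≤ b * n := by gcongr; exact min_le_left b 1
    exact_mod_cast (hsize.trans hb').trans (hdeg _ (card_pair hac))
  have hcount :
      (numReachSets E x y m : ℝ) * M ^ 6 ≤ (m + 6) ^ 6 * numReachSets E x y (m + 6) := by
    simp only [numReachSets_eq_card_reachSets]
    exact_mod_cast card_reachSets_mul_pow_le hE x y hn' hdeg'
  calc (c / 2) ^ 6 / (m + 6) ^ 6 * (n : ℝ) ^ 6 * (numReachSets E x y m : ℝ)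
      = (c * n / 2) ^ 6 * numReachSets E x y m / (m + 6) ^ 6 := by ring
    _ ≤ (M : ℝ) ^ 6 * numReachSets E x y m / (m + 6) ^ 6 := by gcongr
    _ ≤ (numReachSets E x y (m + 6) : ℝ) := by
      rw [div_le_iff₀ (by positivity)]
      linarith

theorem exists_isReachable_succ (hb : 0 < b) {i : ℕ} (hi : 1 ≤ i) :
    ∃ γ : ℝ, 0 < γ ∧ ∃ n₀ : ℕ, ∀ n : ℕ, n₀ ≤ n →
      ∀ E : Finset (Finset (Fin n)), (∀ e ∈ E, e.card = 3) →
      (∀ S : Finset (Fin n), S.card = 2 → b * n ≤ (degS E S : ℝ)) →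
      ∀ (x y : Fin n) (β : ℝ),
        IsReachable β i E x y → IsReachable (γ * β) (i + 1) E x y := by
  obtain ⟨γ, hγ, n₀, hstep⟩ := exists_mul_pow_mul_numReachSets_le hb (6 * i - 1)
  refine ⟨γ, hγ, n₀, fun n hn E hE hdeg x y β hxy => ?_⟩
  have hexp : 6 * (i + 1) - 1 = 6 * i - 1 + 6 := by omega
  unfold IsReachable at hxy ⊢
  rw [hexp, pow_add]
  calc γ * β * ((n : ℝ) ^ (6 * i - 1) * (n : ℝ) ^ 6)
      = γ * (n : ℝ) ^ 6 * (β * (n : ℝ) ^ (6 * i - 1)) := by ring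
    _ ≤ γ * (n : ℝ) ^ 6 * numReachSets E x y (6 * i - 1) := by gcongr
    _ ≤ numReachSets E x y (6 * i - 1 + 6) := hstep n hn E hE hdeg x y

theorem exists_isReachable_add (hb : 0 < b) {i : ℕ} (hi : 1 ≤ i) {β : ℝ} (hβ : 0 < β)
    (j : ℕ) :
    ∃ β' : ℝ, 0 < β' ∧ ∃ n₀ : ℕ, ∀ n : ℕ, n₀ ≤ n →
      ∀ E : Finset (Finset (Fin n)), (∀ e ∈ E, e.card = 3) →
      (∀ S : Finset (Fin n), S.card = 2 → b * n ≤ (degS E S : ℝ)) →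
      ∀ x y : Fin n, IsReachable β i E x y → IsReachable β' (i + j) E x y := by
  induction j with
  | zero => exact ⟨β, hβ, 0, fun _ _ _ _ _ _ _ h => h⟩
  | succ j ih =>
    obtain ⟨β', hβ', n₁, hreach⟩ := ih
    obtain ⟨γ, hγ, n₂, hstep⟩ := exists_isReachable_succ hb (i := i + j) (by omega)
    exact ⟨γ * β', by positivity, max n₁ n₂, fun n hn E hE hdeg x y hxy =>
      hstep n (le_of_max_le_right hn) E hE hdeg x y β'
        (hreach n (le_of_max_le_left hn) E hE hdeg x y hxy)⟩

end Reachability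

/-- Corollary: for every `b > 0` there is `β₀ > 0` such that for all
`0 < β ≤ β₀` and integers `i₀' > i₀ ≥ 1` there are `β' > 0` and `n₀` so that in every
`n`-vertex 3-graph (`n ≥ n₀`) with `δ₂(H) ≥ bn`, `(β, i₀)`-reachable vertices are
`(β', i₀')`-reachable. -/
theorem reachability_corollary (b : ℝ) (hb : 0 < b) :
    ∃ β₀ : ℝ, 0 < β₀ ∧ ∀ β : ℝ, 0 < β → β ≤ β₀ →
      ∀ i₀ i₀' : ℕ, 1 ≤ i₀ → i₀ < i₀' →
        ∃ β' : ℝ, 0 < β' ∧ ∃ n₀ : ℕ, ∀ n : ℕ, n₀ ≤ n →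
          ∀ E : Finset (Finset (Fin n)), (∀ e ∈ E, e.card = 3) →
          (∀ S : Finset (Fin n), S.card = 2 → b * n ≤ (degS E S : ℝ)) →
          ∀ x y : Fin n, IsReachable β i₀ E x y → IsReachable β' i₀' E x y := by
  refine ⟨1, one_pos, fun β hβ _ i₀ i₀' hi₀ hlt => ?_⟩
  obtain ⟨β', hβ', n₀, hreach⟩ := exists_isReachable_add hb hi₀ hβ (i₀' - i₀)
  rw [Nat.add_sub_cancel' hlt.le] at hreach
  exact ⟨β', hβ', n₀, hreach⟩
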